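/- Let P be a finite p-group with a group C acting on it, and suppose P = P₁ × ⋯ × Pₙ where C permutes the factors {P₁,…,Pₙ} semiregularly. Then Z(C_P(C)) ≤ Z(P), and consequently Z(C_P(C)) = C_{Z(P)}(C). -/

import Mathlib

/-!
An element `g` centralizing the fixed points is central as soon as it commutes with every `x`
in every factor `Pᵢ`. The orbit product `y = ∏ₐ a • x` is fixed, hence commutes with `g`. By
semiregularity, `a • x` lies in a factor other than `Pᵢ` for `a ≠ 1`, so the `Pᵢ`-coordinate
of `y` is `x`. Projecting `g y = y g` onto `Pᵢ` shows that the `Pᵢ`-coordinate of `g` commutes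
with `x`, and the other coordinates of `g` commute with `x` anyway.
-/

/-- The subgroup of fixed points of an action `φ : R →* MulAut G`. -/
def fixedSubgroup {R G : Type*} [Group R] [Group G] (φ : R →* MulAut G) : Subgroup G where
  carrier := {g | ∀ r : R, φ r g = g}
  one_mem' := by intro r; simp
  mul_mem' := by intro a b ha hb r; simp [map_mul, ha r, hb r]
  inv_mem' := by intro a ha r; simp [ha r]

namespace Finset

variable {α β : Type*} [Monoid β]

theorem noncommProd_eq_single_of_mem [DecidableEq α] (s : Finset α) (f : α → β) (comm)
    {a : α} (ha : a ∈ s) (h : ∀ b ∈ s, b ≠ a → f b = 1) :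
    s.noncommProd f comm = f a := by
  rw [← noncommProd_erase_mul s ha f comm (comm.mono (coe_subset.2 (erase_subset a s))),
    noncommProd_eq_pow_card (s.erase a) f _ 1
    fun b hb => h b (mem_of_mem_erase hb) (ne_of_mem_erase hb), one_pow, one_mul]

theorem noncommProd_univ_comp_equiv [Fintype α] (f : α → β) (e : α ≃ α) (comm') (comm) :
    univ.noncommProd (f ∘ e) comm' = univ.noncommProd f comm := by
  simp only [noncommProd]
  congr 1
  conv_rhs => rw [← map_univ_equiv e, map_val, Multiset.map_map]
  rfl

end Finset

section InternalDirectProduct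

variable {P ι : Type*} [Group P] [Fintype ι] {Ps : ι → Subgroup P}
  {hcomm : Pairwise fun i j => ∀ (x : Ps i) (y : Ps j),
    Commute ((Ps i).subtype x) ((Ps j).subtype y)}
  (hprod : Function.Bijective (MonoidHom.noncommPiCoprod (fun i => (Ps i).subtype) hcomm))

noncomputable def factorProj (i : ι) : P →* Ps i :=
  (Pi.evalMonoidHom _ i).comp (MulEquiv.ofBijective _ hprod).symm.toMonoidHom

theorem ofBijective_noncommPiCoprod_symm_apply_of_mem [DecidableEq ι] {i : ι} {x : P}
    (hx : x ∈ Ps i) :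
    (MulEquiv.ofBijective _ hprod).symm x = Pi.mulSingle i ⟨x, hx⟩ := by
  rw [MulEquiv.symm_apply_eq, MulEquiv.ofBijective_apply, MonoidHom.noncommPiCoprod_mulSingle]
  rfl

theorem factorProj_apply_of_mem {i : ι} {x : P} (hx : x ∈ Ps i) :
    factorProj hprod i x = ⟨x, hx⟩ := by
  classical
  simp [factorProj, ofBijective_noncommPiCoprod_symm_apply_of_mem hprod hx]

theorem factorProj_apply_of_mem_ne {i j : ι} {x : P} (hx : x ∈ Ps j) (hji : j ≠ i) :
    factorProj hprod i x = 1 := by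
  classical
  simp [factorProj, ofBijective_noncommPiCoprod_symm_apply_of_mem hprod hx, hji.symm]

theorem commute_of_commute_factorProj {i : ι} {g x : P} (hx : x ∈ Ps i)
    (h : Commute (factorProj hprod i g : P) x) : Commute g x := by
  rw [← (MulEquiv.ofBijective _ hprod).apply_symm_apply g, MulEquiv.ofBijective_apply,
    MonoidHom.noncommPiCoprod_apply]
  refine (Finset.noncommProd_commute _ _ _ _ fun j _ => ?_).symm
  by_cases hji : j = i
  · subst hji
    exact h.symm
  · exact (hcomm hji _ ⟨x, hx⟩).symm

theorem mem_center_of_forall_commute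
    (hsurj : Function.Surjective (MonoidHom.noncommPiCoprod (fun i => (Ps i).subtype) hcomm))
    {g : P} (h : ∀ i, ∀ x ∈ Ps i, Commute g x) : g ∈ Subgroup.center P := by
  refine Subgroup.mem_center_iff.2 fun z => ?_
  obtain ⟨u, rfl⟩ := hsurj z
  exact (MonoidHom.commute_noncommPiCoprod (fun i => (Ps i).subtype) (fun i y => h i y y.2) u).symm

end InternalDirectProduct

section FixedPoints

variable {G P : Type*} [Group G] [Group P] (ψ : G →* MulAut P)

theorem fixedSubgroup_range_subtype : fixedSubgroup ψ.range.subtype = fixedSubgroup ψ := by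
  ext g
  exact ⟨fun h c => h ⟨ψ c, c, rfl⟩, fun h ⟨_, c, hc⟩ => hc ▸ h c⟩

theorem noncommProd_orbit_mem_fixedSubgroup [Fintype G] (x : P)
    (comm : ((Finset.univ : Finset G) : Set G).Pairwise (Function.onFun Commute fun a => ψ a x)) :
    Finset.univ.noncommProd (fun a => ψ a x) comm ∈ fixedSubgroup ψ := by
  intro b
  rw [← MulEquiv.coe_toMonoidHom, Finset.map_noncommProd]
  simp only [MulEquiv.coe_toMonoidHom, ← MulAut.mul_apply, ← map_mul]
  exact Finset.noncommProd_univ_comp_equiv (fun a => ψ a x) (Equiv.mulLeft b) _ comm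

end FixedPoints

section Semiregular

variable {G P ι : Type*} [Group G] [Group P] (ψ : G →* MulAut P) {Ps : ι → Subgroup P}

theorem exists_ne_mem_of_map_ne (hperm : ∀ a i, ∃ j, (Ps i).map (ψ a).toMonoidHom = Ps j)
    {a : G} {i : ι} (ha : (Ps i).map (ψ a).toMonoidHom ≠ Ps i) {x : P} (hx : x ∈ Ps i) :
    ∃ j ≠ i, ψ a x ∈ Ps j := by
  obtain ⟨j, hj⟩ := hperm a i
  exact ⟨j, fun hji => ha (hji ▸ hj), hj ▸ Subgroup.mem_map_of_mem _ hx⟩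

theorem pairwise_commute_orbit
    (hcomm : Pairwise fun i j => ∀ (x : Ps i) (y : Ps j),
      Commute ((Ps i).subtype x) ((Ps j).subtype y))
    (hperm : ∀ a i, ∃ j, (Ps i).map (ψ a).toMonoidHom = Ps j)
    (hsemireg : ∀ a : G, a ≠ 1 → ∀ i, (Ps i).map (ψ a).toMonoidHom ≠ Ps i)
    {i : ι} {x : P} (hx : x ∈ Ps i) : Pairwise (Function.onFun Commute fun a => ψ a x) := by
  intro a b hab
  have hba : b⁻¹ * a ≠ 1 := by simpa [inv_mul_eq_one] using hab.symm
  obtain ⟨j, hji, hj⟩ := exists_ne_mem_of_map_ne ψ hperm (hsemireg _ hba i) hx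
  have h : Commute (ψ (b⁻¹ * a) x) x := hcomm hji ⟨_, hj⟩ ⟨x, hx⟩
  simpa [← MulAut.mul_apply, ← map_mul] using h.map (ψ b).toMonoidHom

theorem centralizer_fixedSubgroup_le_center [Finite G] [Fintype ι]
    {hcomm : Pairwise fun i j => ∀ (x : Ps i) (y : Ps j),
      Commute ((Ps i).subtype x) ((Ps j).subtype y)}
    (hprod : Function.Bijective (MonoidHom.noncommPiCoprod (fun i => (Ps i).subtype) hcomm))
    (hperm : ∀ a i, ∃ j, (Ps i).map (ψ a).toMonoidHom = Ps j)
    (hsemireg : ∀ a : G, a ≠ 1 → ∀ i, (Ps i).map (ψ a).toMonoidHom ≠ Ps i) :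
    Subgroup.centralizer (fixedSubgroup ψ : Set P) ≤ Subgroup.center P := by
  intro g hg
  refine mem_center_of_forall_commute hprod.2 fun i x hx => ?_
  have := Fintype.ofFinite G
  have comm := (pairwise_commute_orbit ψ hcomm hperm hsemireg hx).set_pairwise
    (Finset.univ : Finset G)
  have hgy : Commute g (Finset.univ.noncommProd (fun a => ψ a x) comm) :=
    (Subgroup.mem_centralizer_iff.1 hg _ (noncommProd_orbit_mem_fixedSubgroup ψ x comm)).symm
  have hy : factorProj hprod i (Finset.univ.noncommProd (fun a => ψ a x) comm) = ⟨x, hx⟩ := by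
    classical
    rw [Finset.map_noncommProd]
    refine (Finset.noncommProd_eq_single_of_mem _ _ _ (Finset.mem_univ 1) ?_).trans ?_
    · intro a _ ha
      obtain ⟨j, hji, hj⟩ := exists_ne_mem_of_map_ne ψ hperm (hsemireg a ha i) hx
      exact factorProj_apply_of_mem_ne hprod hj hji
    · simp [factorProj_apply_of_mem hprod hx]
  refine commute_of_commute_factorProj hprod hx ?_
  have h := hgy.map (factorProj hprod i)
  rw [hy] at h
  exact h.map (Ps i).subtype

end Semiregular

theorem stmt10_general {C P : Type*} [Group C] [Group P] [Finite P]
    (φ : C →* MulAut P) (n : ℕ) (Ps : Fin n → Subgroup P)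
    (hcomm : Pairwise fun i j => ∀ (x : (Ps i)) (y : (Ps j)),
      Commute ((Ps i).subtype x) ((Ps j).subtype y))
    (hprod : Function.Bijective
      (MonoidHom.noncommPiCoprod (fun i => (Ps i).subtype) hcomm))
    (hperm : ∀ (c : C) (i : Fin n), ∃ j, (Ps i).map (φ c).toMonoidHom = Ps j)
    (hsemireg : ∀ c : C, c ≠ 1 → ∀ i, (Ps i).map (φ c).toMonoidHom ≠ Ps i) :
    fixedSubgroup φ ⊓ Subgroup.centralizer (fixedSubgroup φ : Set P) ≤ Subgroup.center P ∧
    fixedSubgroup φ ⊓ Subgroup.centralizer (fixedSubgroup φ : Set P) =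
      Subgroup.center P ⊓ fixedSubgroup φ := by
  have hcentralizer : Subgroup.centralizer (fixedSubgroup φ : Set P) ≤ Subgroup.center P := by
    -- `C` need not be finite, but its image in `MulAut P` is.
    rw [← fixedSubgroup_range_subtype]
    refine centralizer_fixedSubgroup_le_center φ.range.subtype hprod ?_ ?_
    · rintro ⟨_, c, rfl⟩ i
      exact hperm c i
    · rintro ⟨_, c, rfl⟩ ha i
      exact hsemireg c (fun hc => ha (by simp [hc])) i
  have hle : fixedSubgroup φ ⊓ Subgroup.centralizer (fixedSubgroup φ : Set P) ≤
      Subgroup.center P :=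
    inf_le_right.trans hcentralizer
  exact ⟨hle, le_antisymm (le_inf hle inf_le_left)
    fun g hg => ⟨hg.2, Subgroup.center_le_centralizer _ hg.1⟩⟩

theorem stmt10 {C P : Type*} [Group C] [Group P] [Finite P]
    (p : ℕ) (hp : p.Prime) (hP : IsPGroup p P)
    (φ : C →* MulAut P) (n : ℕ) (Ps : Fin n → Subgroup P)
    (hcomm : Pairwise fun i j => ∀ (x : (Ps i)) (y : (Ps j)),
      Commute ((Ps i).subtype x) ((Ps j).subtype y))
    (hprod : Function.Bijective
      (MonoidHom.noncommPiCoprod (fun i => (Ps i).subtype) hcomm))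
    (hperm : ∀ (c : C) (i : Fin n), ∃ j, (Ps i).map (φ c).toMonoidHom = Ps j)
    (hsemireg : ∀ c : C, c ≠ 1 → ∀ i, (Ps i).map (φ c).toMonoidHom ≠ Ps i) :
    fixedSubgroup φ ⊓ Subgroup.centralizer (fixedSubgroup φ : Set P) ≤ Subgroup.center P ∧
    fixedSubgroup φ ⊓ Subgroup.centralizer (fixedSubgroup φ : Set P) =
      Subgroup.center P ⊓ fixedSubgroup φ :=
  stmt10_general φ n Ps hcomm hprod hperm hsemireg
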